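/- Let K be a field in which 2 is invertible and let a₀,a₁,a₂,a₃,a₄,a₅ ∈ K. Define the polynomials f(X) = X⁶ + a₅X⁵ + a₄X⁴ + a₃X³ + a₂X² + a₁X + a₀, P₃(X) = X³ + (a₅/2)X² + ((4a₄ − a₅²)/8)X + (8a₃ − 4a₄a₅ + a₅³)/16, P₄(X) = X·P₃(X) + (64a₂ − 16a₄² − 32a₃a₅ + 24a₄a₅² − 5a₅⁴)/128, and P₅(X) = X·P₄(X) + (128a₁ − 64a₃a₄ − 64a₂a₅ + 48a₄²a₅ + 48a₃a₅² − 40a₄a₅³ + 7a₅⁵)/256. Then the polynomial f(X) − P₃(X)² has degree at most 2, the polynomial X²·f(X) − P₄(X)² has degree at most 3, and the polynomial X⁴·f(X) − P₅(X)² has degree at most 4. -/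

import Mathlib

/-!
The polynomials `P₃`, `P₄ = X P₃ + k₄`, `P₅ = X P₄ + k₅` are the polynomial parts of the Laurent
expansions of `√f`, `X √f`, `X² √f` at infinity. Writing `P₃ = X³ + b₂X² + b₁X + b₀`, the
coefficients `a₅, …, a₁` are recovered as polynomials in `b₀, b₁, b₂, k₄, k₅` (this is where `2` must be
invertible), and then `f - P₃² = 2k₄X² + 2(b₂k₄ + k₅)X + c`. Each new constant is half the leading
coefficient of the previous remainder, so that leading term cancels in `X²f - P₄²` and again in
`X⁴f - P₅²`; what is left are explicit remainders of degree at most `3` and `4`.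
-/

open Polynomial

section CompletingTheSquare

variable {R : Type*} [CommRing R] {b₀ b₁ b₂ k₄ k₅ c : R} {f P₃ P₄ P₅ : R[X]}

theorem X_sq_mul_sub_sq_eq
    (hP₃ : P₃ = X ^ 3 + C b₂ * X ^ 2 + C b₁ * X + C b₀) (hP₄ : P₄ = X * P₃ + C k₄)
    (hR : f - P₃ ^ 2 = C (2 * k₄) * X ^ 2 + C (2 * (b₂ * k₄ + k₅)) * X + C c) :
    X ^ 2 * f - P₄ ^ 2 =
      C (2 * k₅) * X ^ 3 + C (c - 2 * b₁ * k₄) * X ^ 2 - C (2 * b₀ * k₄) * X - C (k₄ ^ 2) := by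
  rw [show X ^ 2 * f - P₄ ^ 2 = X ^ 2 * (f - P₃ ^ 2) - C (2 * k₄) * X * P₃ - C (k₄ ^ 2) by
    rw [hP₄]; simp only [map_mul, map_pow, map_ofNat]; ring, hR, hP₃]
  simp only [map_mul, map_add, map_sub, map_pow, map_ofNat]
  ring

theorem X_pow_four_mul_sub_sq_eq
    (hP₃ : P₃ = X ^ 3 + C b₂ * X ^ 2 + C b₁ * X + C b₀) (hP₄ : P₄ = X * P₃ + C k₄)
    (hP₅ : P₅ = X * P₄ + C k₅)
    (hR : f - P₃ ^ 2 = C (2 * k₄) * X ^ 2 + C (2 * (b₂ * k₄ + k₅)) * X + C c) :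
    X ^ 4 * f - P₅ ^ 2 =
      C (c - 2 * b₂ * k₅ - 2 * b₁ * k₄) * X ^ 4 - C (2 * (b₁ * k₅ + b₀ * k₄)) * X ^ 3
        - C (2 * b₀ * k₅ + k₄ ^ 2) * X ^ 2 - C (2 * k₄ * k₅) * X - C (k₅ ^ 2) := by
  rw [show X ^ 4 * f - P₅ ^ 2 = X ^ 2 * (X ^ 2 * f - P₄ ^ 2) - C (2 * k₅) * X * P₄ - C (k₅ ^ 2) by
    rw [hP₅]; simp only [map_mul, map_pow, map_ofNat]; ring, X_sq_mul_sub_sq_eq hP₃ hP₄ hR, hP₄, hP₃]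
  simp only [map_mul, map_add, map_sub, map_pow, map_ofNat]
  ring

theorem degree_sub_sq_le_of_sub_sq_eq
    (hP₃ : P₃ = X ^ 3 + C b₂ * X ^ 2 + C b₁ * X + C b₀) (hP₄ : P₄ = X * P₃ + C k₄)
    (hP₅ : P₅ = X * P₄ + C k₅)
    (hR : f - P₃ ^ 2 = C (2 * k₄) * X ^ 2 + C (2 * (b₂ * k₄ + k₅)) * X + C c) :
    (f - P₃ ^ 2).degree ≤ 2 ∧ (X ^ 2 * f - P₄ ^ 2).degree ≤ 3 ∧
      (X ^ 4 * f - P₅ ^ 2).degree ≤ 4 := by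
  refine ⟨?_, ?_, ?_⟩
  · rw [hR]; compute_degree
  · rw [X_sq_mul_sub_sq_eq hP₃ hP₄ hR]; compute_degree
  · rw [X_pow_four_mul_sub_sq_eq hP₃ hP₄ hP₅ hR]; compute_degree

end CompletingTheSquare

theorem stmt0 {K : Type*} [Field K] (h2 : (2 : K) ≠ 0)
    (a₀ a₁ a₂ a₃ a₄ a₅ : K)
    (f P₃ P₄ P₅ : Polynomial K)
    (hf : f = X ^ 6 + C a₅ * X ^ 5 + C a₄ * X ^ 4 + C a₃ * X ^ 3 + C a₂ * X ^ 2
      + C a₁ * X + C a₀)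
    (hP₃ : P₃ = X ^ 3 + C (a₅ / 2) * X ^ 2 + C ((4 * a₄ - a₅ ^ 2) / 8) * X
      + C ((8 * a₃ - 4 * a₄ * a₅ + a₅ ^ 3) / 16))
    (hP₄ : P₄ = X * P₃
      + C ((64 * a₂ - 16 * a₄ ^ 2 - 32 * a₃ * a₅ + 24 * a₄ * a₅ ^ 2 - 5 * a₅ ^ 4) / 128))
    (hP₅ : P₅ = X * P₄
      + C ((128 * a₁ - 64 * a₃ * a₄ - 64 * a₂ * a₅ + 48 * a₄ ^ 2 * a₅ + 48 * a₃ * a₅ ^ 2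
        - 40 * a₄ * a₅ ^ 3 + 7 * a₅ ^ 5) / 256)) :
    (f - P₃ ^ 2).degree ≤ 2 ∧ (X ^ 2 * f - P₄ ^ 2).degree ≤ 3 ∧
      (X ^ 4 * f - P₅ ^ 2).degree ≤ 4 := by
  have h8 : (8 : K) ≠ 0 := by convert pow_ne_zero 3 h2 using 1; norm_num
  have h16 : (16 : K) ≠ 0 := by convert pow_ne_zero 4 h2 using 1; norm_num
  have h128 : (128 : K) ≠ 0 := by convert pow_ne_zero 7 h2 using 1; norm_num
  have h256 : (256 : K) ≠ 0 := by convert pow_ne_zero 8 h2 using 1; norm_num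
  generalize hb₂ : a₅ / 2 = b₂ at hP₃
  generalize hb₁ : (4 * a₄ - a₅ ^ 2) / 8 = b₁ at hP₃
  generalize hb₀ : (8 * a₃ - 4 * a₄ * a₅ + a₅ ^ 3) / 16 = b₀ at hP₃
  generalize hk₄ : (64 * a₂ - 16 * a₄ ^ 2 - 32 * a₃ * a₅ + 24 * a₄ * a₅ ^ 2 - 5 * a₅ ^ 4) / 128
    = k₄ at hP₄
  generalize hk₅ : (128 * a₁ - 64 * a₃ * a₄ - 64 * a₂ * a₅ + 48 * a₄ ^ 2 * a₅ + 48 * a₃ * a₅ ^ 2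
    - 40 * a₄ * a₅ ^ 3 + 7 * a₅ ^ 5) / 256 = k₅ at hP₅
  have ha₅ : a₅ = 2 * b₂ := by rw [← hb₂]; field_simp
  have ha₄ : a₄ = b₂ ^ 2 + 2 * b₁ := by rw [← hb₂, ← hb₁]; field_simp; ring
  have ha₃ : a₃ = 2 * b₀ + 2 * b₁ * b₂ := by rw [← hb₂, ← hb₁, ← hb₀]; field_simp; ring
  have ha₂ : a₂ = 2 * b₀ * b₂ + b₁ ^ 2 + 2 * k₄ := by
    rw [← hb₂, ← hb₁, ← hb₀, ← hk₄]; field_simp; ring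
  have ha₁ : a₁ = 2 * b₀ * b₁ + 2 * b₂ * k₄ + 2 * k₅ := by
    rw [← hb₂, ← hb₁, ← hb₀, ← hk₄, ← hk₅]; field_simp; ring
  refine degree_sub_sq_le_of_sub_sq_eq (c := a₀ - b₀ ^ 2) hP₃ hP₄ hP₅ ?_
  rw [hf, hP₃, ha₅, ha₄, ha₃, ha₂, ha₁]
  simp only [map_mul, map_add, map_sub, map_pow, map_ofNat]
  ring
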